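/- Let n ≥ 5 and let π ∈ S_n be a cyclic permutation. If the standard cycle form C(π) avoids both the pattern 321 and the pattern 2143, then the one-line notation of π avoids the decreasing pattern δ_5 = 54321; consequently, the one-line notation of π avoids δ_k = k(k−1)⋯21 for every k ≥ 5. -/
import Mathlib


/-- A word `w` (of distinct letters) contains the pattern `σ` if it has a
subsequence order-isomorphic to `σ`. -/
def PContains {n k : ℕ} (w : Fin n → Fin n) (σ : Fin k → Fin k) : Prop :=
  ∃ f : Fin k → Fin n, StrictMono f ∧ ∀ a b : Fin k, σ a < σ b ↔ w (f a) < w (f b)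

/-- A word avoids a pattern if it does not contain it. -/
def PAvoids {n k : ℕ} (w : Fin n → Fin n) (σ : Fin k → Fin k) : Prop :=
  ¬ PContains w σ

/-- The decreasing pattern `δ_k = k(k-1)⋯21` (written 0-indexed). -/
def delta (k : ℕ) : Fin k → Fin k := fun i => i.rev

/-- The pattern 1432 (0-indexed as 0321). -/
def patt1432 : Fin 4 → Fin 4 := ![0, 3, 2, 1]

/-- The pattern 321 (0-indexed as 210). -/
def patt321 : Fin 3 → Fin 3 := ![2, 1, 0]

/-- The pattern 2143 (0-indexed as 1032). -/
def patt2143 : Fin 4 → Fin 4 := ![1, 0, 3, 2]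

/-- The pattern 123 (0-indexed as 012). -/
def patt123 : Fin 3 → Fin 3 := ![0, 1, 2]

/-- `π` is a cyclic permutation: it consists of a single `n`-cycle. -/
def IsNCycle {n : ℕ} (π : Equiv.Perm (Fin n)) : Prop :=
  π.IsCycle ∧ π.support = Finset.univ

/-- The standard cycle form `C(π) = (1, c₂, …, c_n)` of `π`, as a word:
the `i`-th letter is `π^i` applied to the least element (the element "1"). -/
def cycleForm {n : ℕ} (π : Equiv.Perm (Fin n)) : Fin n → Fin n :=
  fun i => (π ^ (i : ℕ)) ⟨0, i.pos⟩

/-- All cycle forms (cyclic rotations of the standard cycle form) of the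
cyclic permutation `π` avoid the pattern `σ`: for every starting letter `x`,
the word `x, π(x), π²(x), …` avoids `σ`. -/
def AllCycleFormsAvoid {n k : ℕ} (π : Equiv.Perm (Fin n)) (σ : Fin k → Fin k) : Prop :=
  ∀ x : Fin n, PAvoids (fun i : Fin n => (π ^ (i : ℕ)) x) σ

/-- `A_n^∘(δ_k; 1432)`: cyclic permutations of `[n]` whose one-line notation
avoids `δ_k` and all of whose cycle forms avoid `1432`. -/
def Acirc (n k : ℕ) : Set (Equiv.Perm (Fin n)) :=
  { π | IsNCycle π ∧ PAvoids (fun i => π i) (delta k) ∧ AllCycleFormsAvoid π patt1432 }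

/-- `A_{n,j}^∘(δ_k; 1432)`: members of `A_n^∘(δ_k;1432)` whose standard cycle
form begins `(1, j, …)`, i.e. `π` sends the element "1" to the element "j"
(0-indexed: `π 0 = j - 1`). -/
def AcircJ (n k j : ℕ) : Set (Equiv.Perm (Fin n)) :=
  { π | π ∈ Acirc n k ∧ ∀ h : 0 < n, ((π ⟨0, h⟩ : Fin n) : ℕ) + 1 = j }

/-- `a_n^∘(δ_k; 1432)`. -/
noncomputable def acirc (n k : ℕ) : ℕ := (Acirc n k).ncard

/-- `a_{n,j}^∘(δ_k; 1432)`. -/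
noncomputable def acircJ (n k j : ℕ) : ℕ := (AcircJ n k j).ncard


section LemAux

private theorem auxNowrap (t0 t1 t2 t3 t4 : ℕ)
    (e1 : ¬(t2 < t1 ∧ t1 < t0)) (e2 : ¬(t3 < t1 ∧ t1 < t0)) (e3 : ¬(t4 < t1 ∧ t1 < t0))
    (e4 : ¬(t3 < t2 ∧ t2 < t0)) (e5 : ¬(t4 < t2 ∧ t2 < t0)) (e6 : ¬(t4 < t3 ∧ t3 < t0))
    (e7 : ¬(t3 < t2 ∧ t2 < t1)) (e8 : ¬(t4 < t2 ∧ t2 < t1)) (e9 : ¬(t4 < t3 ∧ t3 < t1))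
    (e10 : ¬(t4 < t3 ∧ t3 < t2))
    (f1 : ¬(t0 < t1 ∧ t1 < t2)) (f2 : ¬(t0 < t1 ∧ t1 < t3))
    (f3 : ¬(t0 < t1 ∧ t1 < t4)) (f4 : ¬(t0 < t2 ∧ t2 < t3))
    (f5 : ¬(t0 < t2 ∧ t2 < t4)) (f6 : ¬(t0 < t3 ∧ t3 < t4))
    (f7 : ¬(t1 < t2 ∧ t2 < t3)) (f8 : ¬(t1 < t2 ∧ t2 < t4))
    (f9 : ¬(t1 < t3 ∧ t3 < t4)) (f10 : ¬(t2 < t3 ∧ t3 < t4))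
    (hd : t0 ≠ t1 ∧ t0 ≠ t2 ∧ t0 ≠ t3 ∧ t0 ≠ t4 ∧ t1 ≠ t2 ∧ t1 ≠ t3 ∧ t1 ≠ t4 ∧
      t2 ≠ t3 ∧ t2 ≠ t4 ∧ t3 ≠ t4) : False := by omega

private theorem auxPatsplit (t0 t1 t2 t3 : ℕ)
    (e1 : ¬(t2 < t1 ∧ t1 < t0)) (e2 : ¬(t3 < t1 ∧ t1 < t0))
    (e4 : ¬(t3 < t2 ∧ t2 < t0)) (e7 : ¬(t3 < t2 ∧ t2 < t1))
    (f1 : ¬(t0 < t1 ∧ t1 < t2)) (f2 : ¬(t0 < t1 ∧ t1 < t3))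
    (f4 : ¬(t0 < t2 ∧ t2 < t3)) (f7 : ¬(t1 < t2 ∧ t2 < t3))
    (hd : t0 ≠ t1 ∧ t0 ≠ t2 ∧ t0 ≠ t3 ∧ t1 ≠ t2 ∧ t1 ≠ t3 ∧ t2 ≠ t3) :
    (t1 < t0 ∧ t0 < t3 ∧ t3 < t2) ∨ (t2 < t0 ∧ t0 < t3 ∧ t3 < t1) ∨
      (t1 < t3 ∧ t3 < t0 ∧ t0 < t2) ∨ (t2 < t3 ∧ t3 < t0 ∧ t0 < t1) := by omega

private theorem auxLeaf2413 (n t0 t1 t2 t3 P0 P1 P2 P3 Q0 Q1 Q2 Q3 : ℕ)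
    (ho : t2 < t0 ∧ t0 < t3 ∧ t3 < t1)
    (hb : t1 + 1 < n ∧ t3 + 1 < n)
    (hP : P0 < P1 ∧ P1 < P2 ∧ P2 < P3)
    (hQ : Q1 < Q0 ∧ Q2 < Q1 ∧ Q3 < Q2)
    (c2 : t0 = t2 + 1 → P0 = Q2)
    (c3 : t3 = t0 + 1 → P3 = Q0)
    (c4 : t2 < t0 → t0 < t3 + 1 → t3 + 1 < n → ¬(Q3 < P0 ∧ P0 < P2))
    (c5 : t2 + 1 < t0 → ¬(P0 < Q2 ∧ Q2 < P2))
    (c6 : t2 < t0 → t0 < t3 → t3 < t1 + 1 → t1 + 1 < n → ¬(P0 < P2 ∧ P2 < Q1 ∧ Q1 < P3))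
    (c7 : t0 + 1 < t3 → t3 < t1 → ¬(P1 < P3 ∧ P3 < Q0)) : False := by omega

private theorem auxLeaf3142 (n t0 t1 t2 t3 P0 P1 P2 P3 Q0 Q2 : ℕ)
    (ho : t1 < t3 ∧ t3 < t0 ∧ t0 < t2)
    (hb : t2 + 1 < n)
    (hP : P0 < P1 ∧ P1 < P2 ∧ P2 < P3)
    (hQ : Q2 < Q0)
    (c8 : t2 = t0 + 1 → P2 = Q0)
    (c9 : t3 < t2 → t2 + 1 < n → ¬(Q2 < P2 ∧ P2 < P3))
    (c10 : t1 < t0 → t0 + 1 < t2 → ¬(P0 < P1 ∧ P1 < P2 ∧ P2 < Q0)) : False := by omega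

private theorem auxLeaf3412 (n t0 t1 t2 t3 P0 P2 Q0 Q1 Q2 Q3 : ℕ)
    (ho : t2 < t3 ∧ t3 < t0 ∧ t0 < t1)
    (hb : t1 + 1 < n ∧ t3 + 1 < n)
    (hP : P0 < P2)
    (hQ : Q1 < Q0 ∧ Q2 < Q1 ∧ Q3 < Q2)
    (c11 : t2 < t0 → t0 + 1 < t1 + 1 → t1 + 1 < n → ¬(P0 < P2 ∧ P2 < Q1 ∧ Q1 < Q0))
    (c12 : t2 + 1 < t3 + 1 → t3 + 1 < n → ¬(Q3 < Q2 ∧ Q2 < P2)) : False := by omega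

private theorem auxMk3 {n : ℕ} (w : Fin n → Fin n) (hav : PAvoids w patt321) (i j k : Fin n)
    (hij : i < j) (hjk : j < k) : ¬(w k < w j ∧ w j < w i) := by
  rintro ⟨h1, h2⟩
  refine hav ⟨![i, j, k], ?_, ?_⟩
  · intro a b hab
    fin_cases a <;> fin_cases b <;>
      first
        | exact absurd hab (by decide)
        | exact hij | exact hjk | exact hij.trans hjk
  · intro a b
    fin_cases a <;> fin_cases b <;>
      first
        | exact iff_of_false (by decide) (lt_irrefl _)
        | exact iff_of_true (by decide) h1
        | exact iff_of_true (by decide) h2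
        | exact iff_of_true (by decide) (h1.trans h2)
        | exact iff_of_false (by decide) (lt_asymm h1)
        | exact iff_of_false (by decide) (lt_asymm h2)
        | exact iff_of_false (by decide) (lt_asymm (h1.trans h2))

private theorem auxMk4 {n : ℕ} (w : Fin n → Fin n) (hav : PAvoids w patt2143) (i j k l : Fin n)
    (hij : i < j) (hjk : j < k) (hkl : k < l) :
    ¬(w j < w i ∧ w i < w l ∧ w l < w k) := by
  rintro ⟨h1, h2, h3⟩
  refine hav ⟨![i, j, k, l], ?_, ?_⟩
  · intro a b hab
    fin_cases a <;> fin_cases b <;>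
      first
        | exact absurd hab (by decide)
        | exact hij | exact hjk | exact hkl
        | exact hij.trans hjk | exact hjk.trans hkl
        | exact (hij.trans hjk).trans hkl
  · intro a b
    fin_cases a <;> fin_cases b <;>
      first
        | exact iff_of_false (by decide) (lt_irrefl _)
        | exact iff_of_true (by decide) h1
        | exact iff_of_true (by decide) h2
        | exact iff_of_true (by decide) h3
        | exact iff_of_true (by decide) (h1.trans h2)
        | exact iff_of_true (by decide) (h2.trans h3)
        | exact iff_of_true (by decide) (h1.trans (h2.trans h3))
        | exact iff_of_false (by decide) (lt_asymm h1)
        | exact iff_of_false (by decide) (lt_asymm h2)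
        | exact iff_of_false (by decide) (lt_asymm h3)
        | exact iff_of_false (by decide) (lt_asymm (h1.trans h2))
        | exact iff_of_false (by decide) (lt_asymm (h2.trans h3))
        | exact iff_of_false (by decide) (lt_asymm (h1.trans (h2.trans h3)))

private theorem auxCore (n : ℕ) (g : ℕ → ℕ)
    (hg0 : g 0 = 0) (hgn : g n = 0)
    (hginj : ∀ a b : ℕ, a < n → b < n → g a = g b → a = b)
    (K3 : ∀ a b c : ℕ, a < b → b < c → c < n → ¬(g c < g b ∧ g b < g a))
    (K4 : ∀ a b c d : ℕ, a < b → b < c → c < d → d < n →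
      ¬(g b < g a ∧ g a < g d ∧ g d < g c))
    (t0 t1 t2 t3 t4 : ℕ)
    (h0 : t0 < n) (h1 : t1 < n) (h2 : t2 < n) (h3 : t3 < n) (h4 : t4 < n)
    (hP01 : g t0 < g t1) (hP12 : g t1 < g t2) (hP23 : g t2 < g t3) (hP34 : g t3 < g t4)
    (hQ01 : g (t1+1) < g (t0+1)) (hQ12 : g (t2+1) < g (t1+1))
    (hQ23 : g (t3+1) < g (t2+1)) (hQ34 : g (t4+1) < g (t3+1)) : False := by
  have hP02 := hP01.trans hP12
  have hP03 := hP02.trans hP23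
  have hP04 := hP03.trans hP34
  have hP13 := hP12.trans hP23
  have hP14 := hP13.trans hP34
  have hP24 := hP23.trans hP34
  have hQ02 := hQ12.trans hQ01
  have hQ03 := hQ23.trans hQ02
  have hQ04 := hQ34.trans hQ03
  have hQ13 := hQ23.trans hQ12
  have hQ14 := hQ34.trans hQ13
  have hQ24 := hQ34.trans hQ23
  have d01 : t0 ≠ t1 := fun h => by rw [h] at hP01; omega
  have d02 : t0 ≠ t2 := fun h => by rw [h] at hP02; omega
  have d03 : t0 ≠ t3 := fun h => by rw [h] at hP03; omega
  have d04 : t0 ≠ t4 := fun h => by rw [h] at hP04; omega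
  have d12 : t1 ≠ t2 := fun h => by rw [h] at hP12; omega
  have d13 : t1 ≠ t3 := fun h => by rw [h] at hP13; omega
  have d14 : t1 ≠ t4 := fun h => by rw [h] at hP14; omega
  have d23 : t2 ≠ t3 := fun h => by rw [h] at hP23; omega
  have d24 : t2 ≠ t4 := fun h => by rw [h] at hP24; omega
  have d34 : t3 ≠ t4 := fun h => by rw [h] at hP34; omega
  have e1 : ¬(t2 < t1 ∧ t1 < t0) := fun h => K3 t2 t1 t0 h.1 h.2 h0 ⟨hP01, hP12⟩
  have e2 : ¬(t3 < t1 ∧ t1 < t0) := fun h => K3 t3 t1 t0 h.1 h.2 h0 ⟨hP01, hP13⟩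
  have e3 : ¬(t4 < t1 ∧ t1 < t0) := fun h => K3 t4 t1 t0 h.1 h.2 h0 ⟨hP01, hP14⟩
  have e4 : ¬(t3 < t2 ∧ t2 < t0) := fun h => K3 t3 t2 t0 h.1 h.2 h0 ⟨hP02, hP23⟩
  have e5 : ¬(t4 < t2 ∧ t2 < t0) := fun h => K3 t4 t2 t0 h.1 h.2 h0 ⟨hP02, hP24⟩
  have e6 : ¬(t4 < t3 ∧ t3 < t0) := fun h => K3 t4 t3 t0 h.1 h.2 h0 ⟨hP03, hP34⟩
  have e7 : ¬(t3 < t2 ∧ t2 < t1) := fun h => K3 t3 t2 t1 h.1 h.2 h1 ⟨hP12, hP23⟩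
  have e8 : ¬(t4 < t2 ∧ t2 < t1) := fun h => K3 t4 t2 t1 h.1 h.2 h1 ⟨hP12, hP24⟩
  have e9 : ¬(t4 < t3 ∧ t3 < t1) := fun h => K3 t4 t3 t1 h.1 h.2 h1 ⟨hP13, hP34⟩
  have e10 : ¬(t4 < t3 ∧ t3 < t2) := fun h => K3 t4 t3 t2 h.1 h.2 h2 ⟨hP23, hP34⟩
  have f1 : ¬(t0 < t1 ∧ t1 < t2 ∧ t2 + 1 < n) :=
    fun h => K3 (t0+1) (t1+1) (t2+1) (by omega) (by omega) h.2.2 ⟨hQ12, hQ01⟩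
  have f2 : ¬(t0 < t1 ∧ t1 < t3 ∧ t3 + 1 < n) :=
    fun h => K3 (t0+1) (t1+1) (t3+1) (by omega) (by omega) h.2.2 ⟨hQ13, hQ01⟩
  have f3 : ¬(t0 < t1 ∧ t1 < t4 ∧ t4 + 1 < n) :=
    fun h => K3 (t0+1) (t1+1) (t4+1) (by omega) (by omega) h.2.2 ⟨hQ14, hQ01⟩
  have f4 : ¬(t0 < t2 ∧ t2 < t3 ∧ t3 + 1 < n) :=
    fun h => K3 (t0+1) (t2+1) (t3+1) (by omega) (by omega) h.2.2 ⟨hQ23, hQ02⟩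
  have f5 : ¬(t0 < t2 ∧ t2 < t4 ∧ t4 + 1 < n) :=
    fun h => K3 (t0+1) (t2+1) (t4+1) (by omega) (by omega) h.2.2 ⟨hQ24, hQ02⟩
  have f6 : ¬(t0 < t3 ∧ t3 < t4 ∧ t4 + 1 < n) :=
    fun h => K3 (t0+1) (t3+1) (t4+1) (by omega) (by omega) h.2.2 ⟨hQ34, hQ03⟩
  have f7 : ¬(t1 < t2 ∧ t2 < t3 ∧ t3 + 1 < n) :=
    fun h => K3 (t1+1) (t2+1) (t3+1) (by omega) (by omega) h.2.2 ⟨hQ23, hQ12⟩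
  have f8 : ¬(t1 < t2 ∧ t2 < t4 ∧ t4 + 1 < n) :=
    fun h => K3 (t1+1) (t2+1) (t4+1) (by omega) (by omega) h.2.2 ⟨hQ24, hQ12⟩
  have f9 : ¬(t1 < t3 ∧ t3 < t4 ∧ t4 + 1 < n) :=
    fun h => K3 (t1+1) (t3+1) (t4+1) (by omega) (by omega) h.2.2 ⟨hQ34, hQ13⟩
  have f10 : ¬(t2 < t3 ∧ t3 < t4 ∧ t4 + 1 < n) :=
    fun h => K3 (t2+1) (t3+1) (t4+1) (by omega) (by omega) h.2.2 ⟨hQ34, hQ23⟩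
  by_cases hwr : t4 + 1 = n
  · have hlt : ∀ t : ℕ, t < n → t ≠ t4 → t + 1 < n := by
      intro t ht hne
      rw [← hwr] at ht ⊢
      exact Nat.succ_lt_succ (lt_of_le_of_ne (Nat.lt_succ_iff.mp ht) hne)
    have hb0 : t0 + 1 < n := hlt t0 h0 d04
    have hb1 : t1 + 1 < n := hlt t1 h1 d14
    have hb2 : t2 + 1 < n := hlt t2 h2 d24
    have hb3 : t3 + 1 < n := hlt t3 h3 d34
    rcases auxPatsplit t0 t1 t2 t3 e1 e2 e4 e7
        (fun h => f1 ⟨h.1, h.2, hb2⟩) (fun h => f2 ⟨h.1, h.2, hb3⟩)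
        (fun h => f4 ⟨h.1, h.2, hb3⟩) (fun h => f7 ⟨h.1, h.2, hb3⟩)
        ⟨d01, d02, d03, d12, d13, d23⟩ with hpat | hpat | hpat | hpat
    · exact K4 t1 t0 t3 t2 hpat.1 hpat.2.1 hpat.2.2 h2 ⟨hP01, hP12, hP23⟩
    · exact auxLeaf2413 n t0 t1 t2 t3 (g t0) (g t1) (g t2) (g t3)
        (g (t0+1)) (g (t1+1)) (g (t2+1)) (g (t3+1)) hpat ⟨hb1, hb3⟩
        ⟨hP01, hP12, hP23⟩ ⟨hQ01, hQ12, hQ23⟩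
        (fun h => by rw [h])
        (fun h => by rw [h])
        (fun x y b => K3 t2 t0 (t3+1) x y b)
        (fun x => K3 t2 (t2+1) t0 (by omega) x h0)
        (fun x y zz b => K4 t2 t0 t3 (t1+1) x y zz b)
        (fun x y => K3 (t0+1) t3 t1 x y h1)
    · exact auxLeaf3142 n t0 t1 t2 t3 (g t0) (g t1) (g t2) (g t3)
        (g (t0+1)) (g (t2+1)) hpat hb2 ⟨hP01, hP12, hP23⟩ hQ02
        (fun h => by rw [h])
        (fun x b => K3 t3 t2 (t2+1) x (by omega) b)
        (fun x y => K4 t1 t0 (t0+1) t2 x (by omega) y h2)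
    · exact auxLeaf3412 n t0 t1 t2 t3 (g t0) (g t2)
        (g (t0+1)) (g (t1+1)) (g (t2+1)) (g (t3+1)) hpat ⟨hb1, hb3⟩ hP02
        ⟨hQ01, hQ12, hQ23⟩
        (fun x y b => K4 t2 t0 (t0+1) (t1+1) x (by omega) y b)
        (fun x b => K3 t2 (t2+1) (t3+1) (by omega) x b)
  · have h4' : t4 + 1 < n := Nat.lt_of_le_of_ne (Nat.succ_le_of_lt h4) hwr
    have hnz : ∀ t t' : ℕ, t < n → g t' < g (t + 1) → t + 1 < n := by
      intro t t' ht hlt'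
      rcases Nat.lt_or_ge (t + 1) n with h | h
      · exact h
      · have he : t + 1 = n := le_antisymm (Nat.succ_le_of_lt ht) h
        rw [he, hgn] at hlt'
        exact absurd hlt' (Nat.not_lt_zero _)
    have hb0 : t0 + 1 < n := hnz t0 (t1 + 1) h0 hQ01
    have hb1 : t1 + 1 < n := hnz t1 (t2 + 1) h1 hQ12
    have hb2 : t2 + 1 < n := hnz t2 (t3 + 1) h2 hQ23
    have hb3 : t3 + 1 < n := hnz t3 (t4 + 1) h3 hQ34
    exact auxNowrap t0 t1 t2 t3 t4 e1 e2 e3 e4 e5 e6 e7 e8 e9 e10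
      (fun h => f1 ⟨h.1, h.2, hb2⟩) (fun h => f2 ⟨h.1, h.2, hb3⟩)
      (fun h => f3 ⟨h.1, h.2, h4'⟩) (fun h => f4 ⟨h.1, h.2, hb3⟩)
      (fun h => f5 ⟨h.1, h.2, h4'⟩) (fun h => f6 ⟨h.1, h.2, h4'⟩)
      (fun h => f7 ⟨h.1, h.2, hb3⟩) (fun h => f8 ⟨h.1, h.2, h4'⟩)
      (fun h => f9 ⟨h.1, h.2, h4'⟩) (fun h => f10 ⟨h.1, h.2, h4'⟩)
      ⟨d01, d02, d03, d04, d12, d13, d14, d23, d24, d34⟩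

end LemAux

/-- Lemma 4.1: for `n ≥ 5` and cyclic `π ∈ S_n`, if `C(π)` avoids `321` and
`2143` then the one-line notation of `π` avoids `δ_5`, and consequently avoids
`δ_k` for every `k ≥ 5`. -/
theorem stmt14 (n : ℕ) (hn : 5 ≤ n) (π : Equiv.Perm (Fin n)) (hπ : IsNCycle π)
    (h321 : PAvoids (cycleForm π) patt321)
    (h2143 : PAvoids (cycleForm π) patt2143) :
    PAvoids (fun i => π i) (delta 5) ∧
      ∀ k : ℕ, 5 ≤ k → PAvoids (fun i => π i) (delta k) := by
  have hn0 : 0 < n := by omega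
  set z : Fin n := ⟨0, hn0⟩ with hzdef
  have hsupp : ∀ x : Fin n, π x ≠ x := by
    intro x
    have hx : x ∈ π.support := by rw [hπ.2]; exact Finset.mem_univ x
    exact Equiv.Perm.mem_support.1 hx
  have horder : orderOf π = n := by
    rw [hπ.1.orderOf, hπ.2, Finset.card_univ, Fintype.card_fin]
  have horbit : ∀ x : Fin n, ∃ t : ℕ, t < n ∧ (π ^ t) z = x := by
    intro x
    obtain ⟨i, hi, he⟩ := (hπ.1.sameCycle (hsupp z) (hsupp x)).exists_pow_eq'
    exact ⟨i, horder ▸ hi, he⟩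
  set g : ℕ → ℕ := fun m => (((π ^ m) z : Fin n) : ℕ) with hgdef
  have hg0 : g 0 = 0 := by simp [hgdef, hzdef]
  have hpn : π ^ n = 1 := by
    have := pow_orderOf_eq_one π
    rwa [horder] at this
  have hgn : g n = 0 := by simp [hgdef, hpn, hzdef]
  have hginj : ∀ a b : ℕ, a < n → b < n → g a = g b → a = b := by
    have key : ∀ a b : ℕ, a ≤ b → b < n → g a = g b → a = b := by
      intro a b hle hb hab
      have heq : (π ^ a) z = (π ^ b) z := Fin.val_injective hab
      have hsplit : π ^ (b - a) * π ^ a = π ^ b := by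
        rw [← pow_add]; congr 1; omega
      have h2 : (π ^ (b - a)) ((π ^ a) z) = (π ^ a) z := by
        calc (π ^ (b - a)) ((π ^ a) z) = (π ^ (b - a) * π ^ a) z := rfl
          _ = (π ^ b) z := by rw [hsplit]
          _ = (π ^ a) z := heq.symm
      have hone : π ^ (b - a) = 1 := (hπ.1.pow_eq_one_iff' (hsupp ((π ^ a) z))).2 h2
      have hdvd : n ∣ (b - a) := by
        rw [← horder]; exact orderOf_dvd_of_pow_eq_one hone
      rcases Nat.eq_zero_or_pos (b - a) with hz0 | hpos
      · omega
      · have := Nat.le_of_dvd hpos hdvd; omega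
    intro a b ha hb hab
    rcases le_total a b with h | h
    · exact key a b h hb hab
    · exact (key b a h ha hab.symm).symm
  have hcfeq : ∀ (m : ℕ) (hm : m < n), cycleForm π ⟨m, hm⟩ = (π ^ m) z := fun m hm => rfl
  have K3 : ∀ a b c : ℕ, a < b → b < c → c < n → ¬(g c < g b ∧ g b < g a) := by
    intro a b c hab hbc hcn hcon
    have := auxMk3 (cycleForm π) h321 ⟨a, by omega⟩ ⟨b, by omega⟩ ⟨c, hcn⟩
      (by simpa [Fin.lt_def] using hab) (by simpa [Fin.lt_def] using hbc)
    rw [hcfeq a (by omega), hcfeq b (by omega), hcfeq c hcn] at this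
    exact this ⟨Fin.lt_def.2 hcon.1, Fin.lt_def.2 hcon.2⟩
  have K4 : ∀ a b c d : ℕ, a < b → b < c → c < d → d < n →
      ¬(g b < g a ∧ g a < g d ∧ g d < g c) := by
    intro a b c d hab hbc hcd hdn hcon
    have := auxMk4 (cycleForm π) h2143 ⟨a, by omega⟩ ⟨b, by omega⟩ ⟨c, by omega⟩ ⟨d, hdn⟩
      (by simpa [Fin.lt_def] using hab) (by simpa [Fin.lt_def] using hbc)
      (by simpa [Fin.lt_def] using hcd)
    rw [hcfeq a (by omega), hcfeq b (by omega), hcfeq c (by omega), hcfeq d hdn] at this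
    exact this ⟨Fin.lt_def.2 hcon.1, Fin.lt_def.2 hcon.2.1, Fin.lt_def.2 hcon.2.2⟩
  have hA5 : PAvoids (fun i => π i) (delta 5) := by
    rintro ⟨f, hf, hiff⟩
    have hfv : ∀ a b : Fin 5, a < b → π (f b) < π (f a) := by
      intro a b hab
      have hd : delta 5 b < delta 5 a := Fin.rev_lt_rev.2 hab
      exact (hiff b a).1 hd
    obtain ⟨t0, hb0, he0⟩ := horbit (f 0)
    obtain ⟨t1, hb1, he1⟩ := horbit (f 1)
    obtain ⟨t2, hb2, he2⟩ := horbit (f 2)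
    obtain ⟨t3, hb3, he3⟩ := horbit (f 3)
    obtain ⟨t4, hb4, he4⟩ := horbit (f 4)
    have hgp0 : g t0 = ((f 0 : Fin n) : ℕ) := by rw [hgdef]; simp [he0]
    have hgp1 : g t1 = ((f 1 : Fin n) : ℕ) := by rw [hgdef]; simp [he1]
    have hgp2 : g t2 = ((f 2 : Fin n) : ℕ) := by rw [hgdef]; simp [he2]
    have hgp3 : g t3 = ((f 3 : Fin n) : ℕ) := by rw [hgdef]; simp [he3]
    have hgp4 : g t4 = ((f 4 : Fin n) : ℕ) := by rw [hgdef]; simp [he4]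
    have hgq : ∀ (t : ℕ) (a : Fin 5), (π ^ t) z = f a → g (t + 1) = ((π (f a) : Fin n) : ℕ) := by
      intro t a he
      rw [hgdef]
      simp only [pow_succ']
      rw [show (π * π ^ t) z = π ((π ^ t) z) from rfl, he]
    have hgq0 := hgq t0 0 he0
    have hgq1 := hgq t1 1 he1
    have hgq2 := hgq t2 2 he2
    have hgq3 := hgq t3 3 he3
    have hgq4 := hgq t4 4 he4
    refine auxCore n g hg0 hgn hginj K3 K4 t0 t1 t2 t3 t4 hb0 hb1 hb2 hb3 hb4
      ?_ ?_ ?_ ?_ ?_ ?_ ?_ ?_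
    · rw [hgp0, hgp1]; exact hf (by decide)
    · rw [hgp1, hgp2]; exact hf (by decide)
    · rw [hgp2, hgp3]; exact hf (by decide)
    · rw [hgp3, hgp4]; exact hf (by decide)
    · rw [hgq0, hgq1]; exact hfv 0 1 (by decide)
    · rw [hgq1, hgq2]; exact hfv 1 2 (by decide)
    · rw [hgq2, hgq3]; exact hfv 2 3 (by decide)
    · rw [hgq3, hgq4]; exact hfv 3 4 (by decide)
  refine ⟨hA5, fun k hk hconk => hA5 ?_⟩
  obtain ⟨f, hf, hiff⟩ := hconk
  refine ⟨f ∘ Fin.castLE hk, hf.comp (Fin.strictMono_castLE hk), fun a b => ?_⟩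
  have h1 : delta 5 a < delta 5 b ↔ b < a := Fin.rev_lt_rev
  have h2 : delta k (Fin.castLE hk a) < delta k (Fin.castLE hk b) ↔
      Fin.castLE hk b < Fin.castLE hk a := Fin.rev_lt_rev
  have hcast : b < a ↔ Fin.castLE hk b < Fin.castLE hk a := Iff.rfl
  exact h1.trans (hcast.trans (h2.symm.trans (hiff _ _)))
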